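/- arXiv:0902.1950 — 3 statements merged into one kernel-verified Lean document; each statement's English description precedes it below -/
import Mathlib

section
/- Ore's distributivity theorem for partitions: let U be a type and φ, σ, τ, π : Setoid U. Then φ ⊓ (partImp σ π ⊔ partImp τ π) = (φ ⊓ partImp σ π) ⊔ (φ ⊓ partImp τ π) as setoids. (Partition reading: φ ∨ (¬^π σ ∧ ¬^π τ) = (φ ∨ ¬^π σ) ∧ (φ ∨ ¬^π τ), i.e., any partition joined with the meet of two π-regular partitions distributes across the meet.) -/
/-!
For a fixed `π`, the setoid `partImp σ π` keeps intact every `π`-block that `σ` splits and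
breaks every other `π`-block into singletons. Setoids of this shape, for one `π` and a
`π`-invariant choice of blocks, are closed under `⊔`, the join simply keeping the blocks kept
by either; so the join relation is the union of the two relations, and a union of relations
distributes over intersection with `φ`.
-/

/-- The partition implication `σ ⇒ π`: the setoid generated by the relation
`fun a b => π.Rel a b ∧ ¬ σ.Rel a b`. -/
def partImp {U : Type*} (σ π : Setoid U) : Setoid U :=
  Relation.EqvGen.setoid (fun a b => π a b ∧ ¬ σ a b)

namespace Setoid

variable {U : Type*}

theorem inf_sup_eq_of_sup_rel {φ r s : Setoid U}
    (h : ∀ {a b}, (r ⊔ s) a b → r a b ∨ s a b) :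
    φ ⊓ (r ⊔ s) = φ ⊓ r ⊔ φ ⊓ s := by
  refine le_antisymm (le_def.2 fun hab => ?_) le_inf_sup
  obtain ⟨hφ, hrs⟩ := inf_iff_and.1 hab
  rcases h hrs with hr | hs
  · exact le_def.1 le_sup_left (inf_iff_and.2 ⟨hφ, hr⟩)
  · exact le_def.1 le_sup_right (inf_iff_and.2 ⟨hφ, hs⟩)

def keepBlocks (π : Setoid U) (P : U → Prop) : Setoid U where
  r a b := a = b ∨ π a b ∧ P a ∧ P b
  iseqv := by
    refine ⟨fun a => .inl rfl, ?_, ?_⟩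
    · rintro a b (rfl | ⟨hab, ha, hb⟩)
      exacts [.inl rfl, .inr ⟨π.symm hab, hb, ha⟩]
    · rintro a b c (rfl | ⟨hab, ha, hb⟩) (rfl | ⟨hbc, hb', hc⟩)
      exacts [.inl rfl, .inr ⟨hbc, hb', hc⟩, .inr ⟨hab, ha, hb⟩,
        .inr ⟨π.trans hab hbc, ha, hc⟩]

theorem keepBlocks_mono (π : Setoid U) {P Q : U → Prop} (h : P ≤ Q) :
    π.keepBlocks P ≤ π.keepBlocks Q :=
  le_def.2 fun hab => hab.imp_right fun ⟨hπ, ha, hb⟩ => ⟨hπ, h _ ha, h _ hb⟩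

theorem keepBlocks_sup_keepBlocks {π : Setoid U} {P Q : U → Prop}
    (hP : ∀ {a b}, π a b → P a → P b) (hQ : ∀ {a b}, π a b → Q a → Q b) :
    π.keepBlocks P ⊔ π.keepBlocks Q = π.keepBlocks (P ⊔ Q) := by
  refine le_antisymm (sup_le (keepBlocks_mono π le_sup_left) (keepBlocks_mono π le_sup_right))
    (le_def.2 ?_)
  rintro a b (rfl | ⟨hab, ha | ha, -⟩)
  · exact (π.keepBlocks P ⊔ π.keepBlocks Q).refl a
  · exact le_def.1 le_sup_left (.inr ⟨hab, ha, hP hab ha⟩)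
  · exact le_def.1 le_sup_right (.inr ⟨hab, ha, hQ hab ha⟩)

theorem inf_keepBlocks_sup_keepBlocks (φ : Setoid U) {π : Setoid U} {P Q : U → Prop}
    (hP : ∀ {a b}, π a b → P a → P b) (hQ : ∀ {a b}, π a b → Q a → Q b) :
    φ ⊓ (π.keepBlocks P ⊔ π.keepBlocks Q) =
      φ ⊓ π.keepBlocks P ⊔ φ ⊓ π.keepBlocks Q := by
  refine inf_sup_eq_of_sup_rel fun hab => ?_
  rw [keepBlocks_sup_keepBlocks hP hQ] at hab
  rcases hab with rfl | ⟨hab, ha | ha, -⟩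
  · exact .inl (.inl rfl)
  · exact .inl (.inr ⟨hab, ha, hP hab ha⟩)
  · exact .inr (.inr ⟨hab, ha, hQ hab ha⟩)

def SplitsBlock (σ π : Setoid U) (a : U) : Prop :=
  ∃ c d, π a c ∧ π a d ∧ ¬ σ c d

theorem SplitsBlock.of_rel {σ π : Setoid U} {a b : U} (hab : π a b)
    (h : SplitsBlock σ π a) : SplitsBlock σ π b :=
  let ⟨c, d, hc, hd, hcd⟩ := h
  ⟨c, d, π.trans (π.symm hab) hc, π.trans (π.symm hab) hd, hcd⟩

end Setoid

open Setoid

theorem partImp_rel_of_not_rel {U : Type*} {σ π : Setoid U} {c d x : U} (hx : π c x)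
    (hd : π c d) (hcd : ¬ σ c d) : partImp σ π x c := by
  by_cases hxc : σ x c
  · have hxd : ¬ σ x d := fun hxd => hcd (σ.trans (σ.symm hxc) hxd)
    exact .trans _ d _ (.rel _ _ ⟨π.trans (π.symm hx) hd, hxd⟩)
      (.rel _ _ ⟨π.symm hd, fun hdc => hcd (σ.symm hdc)⟩)
  · exact .rel _ _ ⟨π.symm hx, hxc⟩

theorem partImp_eq_keepBlocks {U : Type*} (σ π : Setoid U) :
    partImp σ π = π.keepBlocks (SplitsBlock σ π) := by
  refine le_antisymm (eqvGen_le fun a b ⟨hab, hσ⟩ => ?_) (le_def.2 ?_)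
  · exact .inr ⟨hab, ⟨a, b, π.refl a, hab, hσ⟩, ⟨a, b, π.symm hab, π.refl b, hσ⟩⟩
  rintro a b (rfl | ⟨hab, ⟨c, d, hc, hd, hcd⟩, -⟩)
  · exact (partImp σ π).refl a
  · have hcd' : π c d := π.trans (π.symm hc) hd
    have hac := partImp_rel_of_not_rel (π.symm hc) hcd' hcd
    have hbc := partImp_rel_of_not_rel (π.trans (π.symm hc) hab) hcd' hcd
    exact (partImp σ π).trans hac ((partImp σ π).symm hbc)

/-- **Ore's distributivity theorem for partitions**: any partition joined with the meet
of two `π`-regular partitions distributes across the meet,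
`φ ∨ (¬^π σ ∧ ¬^π τ) = (φ ∨ ¬^π σ) ∧ (φ ∨ ¬^π τ)`, stated in setoid terms. -/
theorem ore_distributivity {U : Type*} (φ σ τ π : Setoid U) :
    φ ⊓ (partImp σ π ⊔ partImp τ π) = (φ ⊓ partImp σ π) ⊔ (φ ⊓ partImp τ π) := by
  rw [partImp_eq_keepBlocks, partImp_eq_keepBlocks]
  exact inf_keepBlocks_sup_keepBlocks φ SplitsBlock.of_rel SplitsBlock.of_rel
end

section
/- Dual to Ore's theorem: let U be a type and φ, σ, τ, π : Setoid U with φ ≤ π as setoids (i.e., π ⪯ φ in the refinement order, φ lies in the interval [π, 1]). Then φ ⊔ (partImp σ π ⊓ partImp τ π) = (φ ⊔ partImp σ π) ⊓ (φ ⊔ partImp τ π) as setoids. (Partition reading: φ ∧ (¬^π σ ∨ ¬^π τ) = (φ ∧ ¬^π σ) ∨ (φ ∧ ¬^π τ).) -/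
/-!
`partImp σ π` is `π` on every `π`-block that `σ` splits and discrete on every other `π`-block.
On a block split by both `σ` and `τ`, the meet `partImp σ π ⊓ partImp τ π` is therefore already
`π`, which contains the right-hand side. On a block left whole by `σ`, joining `φ ≤ π` with
`partImp σ π` adds nothing to `φ` inside that block, so there the right-hand side is just `φ`.
-/

namespace Setoid

variable {U : Type*}

/-- The setoid that is `π ⊓ φ` on the `π`-block of `a` and `π` elsewhere. -/
def patchBlock (π φ : Setoid U) (a : U) : Setoid U where
  r x y := π x y ∧ (π a x → φ x y)
  iseqv :=
    { refl x := ⟨π.refl x, fun _ => φ.refl x⟩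
      symm h := ⟨π.symm h.1, fun hay => φ.symm (h.2 (π.trans hay (π.symm h.1)))⟩
      trans hxy hyz :=
        ⟨π.trans hxy.1 hyz.1, fun hax => φ.trans (hxy.2 hax) (hyz.2 (π.trans hax hxy.1))⟩ }

theorem le_patchBlock {π φ : Setoid U} (hφ : φ ≤ π) (a : U) : φ ≤ patchBlock π φ a :=
  fun _ _ h => ⟨hφ h, fun _ => h⟩

theorem rel_of_patchBlock {π φ : Setoid U} {a b : U} (h : patchBlock π φ a a b) : φ a b :=
  h.2 (π.refl a)

theorem partImp_le_right (σ π : Setoid U) : partImp σ π ≤ π :=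
  eqvGen_le fun _ _ h => h.1

theorem exists_not_rel_of_splitsBlock {σ π : Setoid U} {a : U} (h : SplitsBlock σ π a) :
    ∃ e, π a e ∧ ¬ σ a e := by
  obtain ⟨c, d, hc, hd, hcd⟩ := h
  by_cases hac : σ a c
  · exact ⟨d, hd, fun had => hcd (σ.trans (σ.symm hac) had)⟩
  · exact ⟨c, hc, hac⟩

theorem partImp_rel_of_splitsBlock {σ π : Setoid U} {a b : U} (h : SplitsBlock σ π a)
    (hab : π a b) : partImp σ π a b := by
  by_cases hσ : σ a b
  · -- route through an element `e` of the block that `σ` separates from `a`, hence from `b`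
    obtain ⟨e, hae, hσe⟩ := exists_not_rel_of_splitsBlock h
    have hae' : partImp σ π a e := Relation.EqvGen.rel _ _ ⟨hae, hσe⟩
    have heb : partImp σ π e b :=
      Relation.EqvGen.rel _ _
        ⟨π.trans (π.symm hae) hab, fun heb => hσe (σ.trans hσ (σ.symm heb))⟩
    exact (partImp σ π).trans hae' heb
  · exact Relation.EqvGen.rel _ _ ⟨hab, hσ⟩

theorem partImp_le_patchBlock {σ π : Setoid U} {a : U} (h : ¬ SplitsBlock σ π a)
    (φ : Setoid U) : partImp σ π ≤ patchBlock π φ a :=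
  eqvGen_le fun x y hxy =>
    ⟨hxy.1, fun hax => absurd ⟨x, y, hax, π.trans hax hxy.1, hxy.2⟩ h⟩

theorem rel_of_sup_partImp_rel {φ σ π : Setoid U} (hφ : φ ≤ π) {a b : U}
    (h : ¬ SplitsBlock σ π a) (hab : (φ ⊔ partImp σ π) a b) : φ a b :=
  rel_of_patchBlock (sup_le (le_patchBlock hφ a) (partImp_le_patchBlock h φ) hab)

end Setoid

/-- **Dual to Ore's theorem**: if `φ` lies in the interval `[π, 1]` of the partition
lattice (i.e. `φ ≤ π` as setoids), then
`φ ∧ (¬^π σ ∨ ¬^π τ) = (φ ∧ ¬^π σ) ∨ (φ ∧ ¬^π τ)`, stated in setoid terms. -/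
theorem ore_dual_distributivity {U : Type*} (φ σ τ π : Setoid U) (hφ : φ ≤ π) :
    φ ⊔ (partImp σ π ⊓ partImp τ π) = (φ ⊔ partImp σ π) ⊓ (φ ⊔ partImp τ π) := by
  refine le_antisymm sup_inf_le fun a b ⟨hσ, hτ⟩ => ?_
  by_cases hs : Setoid.SplitsBlock σ π a
  · by_cases ht : Setoid.SplitsBlock τ π a
    · have hab : π a b := sup_le hφ (Setoid.partImp_le_right σ π) hσ
      exact le_sup_right (a := φ)
        ⟨Setoid.partImp_rel_of_splitsBlock hs hab, Setoid.partImp_rel_of_splitsBlock ht hab⟩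
    · exact le_sup_left (b := partImp σ π ⊓ partImp τ π) (Setoid.rel_of_sup_partImp_rel hφ ht hτ)
  · exact le_sup_left (b := partImp σ π ⊓ partImp τ π) (Setoid.rel_of_sup_partImp_rel hφ hs hσ)
end

section
/- The weak law of excluded middle for π-negation is a partition tautology: let U be a type and σ, π : Setoid U. Then partImp σ π ⊓ partImp (partImp σ π) π = ⊥ as setoids. (Partition reading: ¬^π σ ∨ ¬^π¬^π σ = 1 for all partitions σ, π on U; this is the single π-negation transform of the classical law of excluded middle, a partition tautology that is not intuitionistically valid.) -/
/-!
On a block `B` of `π`, the implication `τ ⇒ π` is generated by the pairs of `B` that `τ`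
distinguishes. If `τ` is indiscrete on `B`, there are none, and `τ ⇒ π` is discrete on `B`.
If `σ` distinguishes some `u, v ∈ B`, then every `x ∈ B` is linked to `u`, directly when
`σ` distinguishes `x, u` and through `v` otherwise, so `σ ⇒ π` is indiscrete on `B` and
`(σ ⇒ π) ⇒ π` is discrete on `B`. Hence on every block one of the two joinands is discrete.
-/

namespace Setoid

variable {U : Type*}

/-- The refinement of `π` that splits the block of `a` into singletons. -/
def splitBlock (π : Setoid U) (a : U) : Setoid U where
  r x y := π x y ∧ (π a x → x = y)
  iseqv :=
    { refl := fun x => ⟨π.refl x, fun _ => rfl⟩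
      symm := fun ⟨hxy, h⟩ => ⟨π.symm hxy, fun hay => (h (π.trans hay (π.symm hxy))).symm⟩
      trans := fun ⟨hxy, h₁⟩ ⟨hyz, h₂⟩ =>
        ⟨π.trans hxy hyz, fun hax => (h₁ hax).trans (h₂ (h₁ hax ▸ hax))⟩ }

end Setoid

section

variable {U : Type*} {σ τ π : Setoid U} {a b u v x y : U}

theorem partImp_le_splitBlock (hτ : ∀ x y, π a x → π a y → τ x y) :
    partImp τ π ≤ π.splitBlock a :=
  Setoid.eqvGen_le fun x y ⟨hxy, hnτ⟩ =>
    ⟨hxy, fun hax => absurd (hτ x y hax (π.trans hax hxy)) hnτ⟩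

theorem eq_of_partImp_of_block_rel (hτ : ∀ x y, π a x → π a y → τ x y)
    (hab : partImp τ π a b) : a = b :=
  (partImp_le_splitBlock hτ hab).2 (π.refl a)

theorem partImp_rel_on_block_of_not_rel (hu : π a u) (hv : π a v) (huv : ¬σ u v)
    (hx : π a x) (hy : π a y) : partImp σ π x y := by
  have generator : ∀ {p q}, π a p → π a q → ¬σ p q → partImp σ π p q :=
    fun hp hq hpq => Relation.EqvGen.rel _ _ ⟨π.trans (π.symm hp) hq, hpq⟩
  have linked_to_u : ∀ {p}, π a p → partImp σ π p u := fun {p} hp => by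
    by_cases hpu : σ p u
    · exact (partImp σ π).trans (generator hp hv fun hpv => huv (σ.trans (σ.symm hpu) hpv))
        ((partImp σ π).symm (generator hu hv huv))
    · exact generator hp hu hpu
  exact (partImp σ π).trans (linked_to_u hx) ((partImp σ π).symm (linked_to_u hy))

end

/-- **Weak law of excluded middle for `π`-negation is a partition tautology**:
`¬^π σ ∨ ¬^π ¬^π σ = 1` for all partitions `σ`, `π`; in setoid terms (partition join is
setoid `⊓`, the discrete partition `1` is setoid `⊥`). -/
theorem weak_excluded_middle_tautology {U : Type*} (σ π : Setoid U) :
    partImp σ π ⊓ partImp (partImp σ π) π = ⊥ := by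
  refine eq_bot_iff.2 fun a b ⟨h₁, h₂⟩ => ?_
  by_cases hσ : ∀ x y, π a x → π a y → σ x y
  · exact eq_of_partImp_of_block_rel hσ h₁
  · push Not at hσ
    obtain ⟨u, v, hu, hv, huv⟩ := hσ
    exact eq_of_partImp_of_block_rel
      (fun _ _ hx hy => partImp_rel_on_block_of_not_rel hu hv huv hx hy) h₂
end
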